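/- arXiv:1411.5751 — 5 statements merged into one kernel-verified Lean document; each statement's English description precedes it below -/
import Mathlib

section
/- For every integer n ≥ 1, the expected length of the first block satisfies E[D_{n,1}] = 2^{2n} / C(2n, n), where C(2n,n) is the central binomial coefficient. Equivalently, ∑_{M} min{ p : M(p) < p } = (2n−1)!! · 4^n / C(2n,n), the sum being over all fixed-point-free involutions M of {1,…,2n}. -/
open Finset MeasureTheory ProbabilityTheory Filter Real

/-- The set of fixed-point-free involutions (perfect matchings) of `{1,…,2n}`,
modeled as permutations of `Fin (2*n)`. -/
def Matchings (n : ℕ) : Finset (Equiv.Perm (Fin (2 * n))) :=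
  Finset.univ.filter (fun M => (∀ p, M (M p) = p) ∧ ∀ p, M p ≠ p)

open scoped Classical in
/-- Probability of an event under the uniform measure on perfect matchings. -/
noncomputable def Pr (n : ℕ) (E : Equiv.Perm (Fin (2 * n)) → Prop) : ℝ :=
  (((Matchings n).filter E).card : ℝ) / ((Matchings n).card : ℝ)

/-- Expectation of a real random variable under the uniform measure on matchings. -/
noncomputable def Ex (n : ℕ) (X : Equiv.Perm (Fin (2 * n)) → ℝ) : ℝ :=
  (∑ M ∈ Matchings n, X M) / ((Matchings n).card : ℝ)

/-- The right endpoints of a matching: points `p` with `M p < p`. -/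
def rightEndpoints (n : ℕ) (M : Equiv.Perm (Fin (2 * n))) : Finset (Fin (2 * n)) :=
  Finset.univ.filter (fun p => M p < p)

/-- `0` followed by the (1-based) positions of the right endpoints, in increasing order. -/
def rePos (n : ℕ) (M : Equiv.Perm (Fin (2 * n))) : List ℕ :=
  0 :: (((rightEndpoints n M).sort (· ≤ ·)).map (fun p => (p : ℕ) + 1))

/-- The length `D_{n,k}` of the `k`-th block: `r_k - r_{k-1}` (with `r_0 = 0`). -/
def D (n : ℕ) (M : Equiv.Perm (Fin (2 * n))) (k : ℕ) : ℕ :=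
  (rePos n M).getD k 0 - (rePos n M).getD (k - 1) 0

/-- `B_{n,i}`: the number of blocks of length `i`. -/
def B (n : ℕ) (M : Equiv.Perm (Fin (2 * n))) (i : ℕ) : ℕ :=
  ((Finset.Icc 1 n).filter (fun k => D n M k = i)).card

/-- `Y_n`: the number of blocks of even length. -/
def Y (n : ℕ) (M : Equiv.Perm (Fin (2 * n))) : ℕ :=
  ∑ i ∈ Finset.Icc 1 n, B n M (2 * i)

/-- The recursively defined "good position" predicate (0-based version of `f`):
`f(1) = true` and `f(p+1)` is true iff `f(p)` is false or position `p` is a right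
endpoint. -/
def good (n : ℕ) (M : Equiv.Perm (Fin (2 * n))) : ℕ → Bool
  | 0 => true
  | q + 1 =>
      !(good n M q) || (if h : q < 2 * n then decide ((M ⟨q, h⟩ : ℕ) < q) else false)

open scoped Classical in
/-- `L_n`: the number of lucky moves. -/
noncomputable def lucky (n : ℕ) (M : Equiv.Perm (Fin (2 * n))) : ℕ :=
  ((Finset.range (2 * n - 1)).filter (fun q =>
    good n M q = true ∧
      (if h : q < 2 * n then ((M ⟨q, h⟩ : ℕ) = q + 1) else False))).card

/-!
`D n M 1 > p` exactly when the first `p` points are left endpoints, i.e. when no two of them are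
matched together. Summing over `p`, `∑_M D n M 1 = ∑_{p < 2n} N_p`, where `N_p` counts the perfect
matchings of `2n` points in which a fixed set of `p` points is matched into its complement.
Removing one point of that set together with its partner (`2n - p` choices) shows
`N_p = (2n - p)(2n - p - 1) ⋯ (2n - 2p + 1) · (2(n - p) - 1)!!`, that is
`N_p · C(2n, n) = (2n - 1)!! · 2^p · C(2n - p, n)`. Finally
`∑_{p ≤ n} 2^p C(2n - p, n) = ∑_{k ≤ n} C(2n + 1, k) = 4^n`.
-/

open Equiv Finset
open scoped Nat

namespace Nat

theorem succ_sub_mul_descFactorial_sub (m q : ℕ) :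
    (m + 1 - q) * (m - q).descFactorial q = (m + 1 - q).descFactorial (q + 1) := by
  rcases le_or_gt q m with hq | hq
  · rw [show m + 1 - q = m - q + 1 by omega, succ_descFactorial_succ]
  · rw [show m + 1 - q = 0 by omega, zero_mul, zero_descFactorial_succ]

theorem doubleFactorial_two_mul_sub_one_mul (k : ℕ) : (2 * k - 1)‼ * (2 ^ k * k !) = (2 * k)! := by
  cases k with
  | zero => rfl
  | succ k =>
    rw [← doubleFactorial_two_mul, show 2 * (k + 1) = 2 * k + 1 + 1 by ring,
      factorial_eq_mul_doubleFactorial, Nat.add_sub_cancel, mul_comm]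

theorem sum_range_choose_succ_succ (m k : ℕ) :
    ∑ i ∈ range (k + 2), (m + 1).choose i =
      2 * ∑ i ∈ range (k + 1), m.choose i + m.choose (k + 1) := by
  have h := (sum_range_succ' (fun i => m.choose i) (k + 1)).symm.trans (sum_range_succ _ _)
  rw [choose_zero_right] at h
  rw [sum_range_succ', sum_congr rfl fun i _ => choose_succ_succ m i, sum_add_distrib,
    choose_zero_right, add_assoc, h]
  ring

theorem sum_range_two_pow_mul_choose_add (N n : ℕ) :
    ∑ j ∈ range (n + 1), 2 ^ j * (N + n - j).choose N =
      ∑ k ∈ range (n + 1), (N + n + 1).choose k := by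
  induction n with
  | zero => simp
  | succ n ih =>
    rw [sum_range_succ', ← add_assoc N n 1, sum_range_choose_succ_succ, ← ih, mul_sum]
    simp only [pow_succ, Nat.add_sub_add_right, pow_zero, one_mul, Nat.sub_zero]
    rw [choose_symm_of_eq_add (add_assoc N n 1)]
    congr 1
    exact sum_congr rfl fun j _ => by ring

theorem sum_range_two_pow_mul_choose (n : ℕ) :
    ∑ p ∈ range (n + 1), 2 ^ p * (2 * n - p).choose n = 4 ^ n := by
  rw [two_mul, sum_range_two_pow_mul_choose_add, ← two_mul, sum_range_choose_halfway]

theorem descFactorial_mul_doubleFactorial_mul_choose {p n : ℕ} (hp : p ≤ n) :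
    (2 * n - p).descFactorial p * (2 * (n - p) - 1)‼ * (2 * n).choose n =
      (2 * n - 1)‼ * (2 ^ p * (2 * n - p).choose n) := by
  obtain ⟨q, rfl⟩ := Nat.exists_eq_add_of_le hp
  rw [show 2 * (p + q) - p = p + 2 * q by omega, Nat.add_sub_cancel_left]
  have hdesc : (2 * q)! * (p + 2 * q).descFactorial p = (p + 2 * q)! := by
    simpa using factorial_mul_descFactorial (le_add_right p (2 * q))
  have hcentral : (2 * (p + q)).choose (p + q) * (p + q)! * (p + q)! = (2 * (p + q))! := by
    simpa [two_mul] using choose_mul_factorial_mul_factorial (le_add_right (p + q) (p + q))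
  have hchoose : (p + 2 * q).choose (p + q) * (p + q)! * q ! = (p + 2 * q)! := by
    have h := choose_mul_factorial_mul_factorial (le_add_right (p + q) q)
    rwa [Nat.add_sub_cancel_left, add_assoc, ← two_mul] at h
  refine eq_of_mul_eq_mul_right (m := 2 ^ q * q ! * (p + q)! * (p + q)!) (by positivity) ?_
  calc _ = (p + 2 * q).descFactorial p * (2 * q)! * (2 * (p + q))! := by
        rw [← doubleFactorial_two_mul_sub_one_mul q, ← hcentral]; ring
    _ = (p + 2 * q)! * (2 * (p + q))! := by rw [← hdesc]; ring
    _ = _ := by rw [← doubleFactorial_two_mul_sub_one_mul (p + q), ← hchoose]; ring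

end Nat

section Matchings

variable {α : Type*} [Fintype α] [DecidableEq α]

def matchingsAvoiding (P : Finset α) : Finset (Perm α) :=
  univ.filter fun M => (∀ x, M (M x) = x) ∧ (∀ x, M x ≠ x) ∧ ∀ x ∈ P, M x ∉ P

@[simp]
theorem mem_matchingsAvoiding {P : Finset α} {M : Perm α} :
    M ∈ matchingsAvoiding P ↔ (∀ x, M (M x) = x) ∧ (∀ x, M x ≠ x) ∧ ∀ x ∈ P, M x ∉ P := by
  simp [matchingsAvoiding]

theorem matchingsAvoiding_singleton (a : α) :
    matchingsAvoiding {a} = matchingsAvoiding (∅ : Finset α) := by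
  ext M
  simp only [mem_matchingsAvoiding, mem_singleton, forall_eq, notMem_empty, not_false_eq_true,
    implies_true, and_true]
  exact ⟨fun h => ⟨h.1, h.2.1⟩, fun h => ⟨h.1, h.2, h.2 a⟩⟩

omit [Fintype α] [DecidableEq α] in
theorem apply_ne_and_ne_iff {M : Perm α} (hM : ∀ x, M (M x) = x) {a b : α} (hab : M a = b)
    (x : α) : (M x ≠ a ∧ M x ≠ b) ↔ (x ≠ a ∧ x ≠ b) := by
  have hb : M x = b ↔ x = a := by rw [← hab, M.apply_eq_iff_eq]
  have ha : M x = a ↔ x = b := by rw [← hM a, hab, M.apply_eq_iff_eq]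
  rw [ne_eq, ne_eq, ha, hb, and_comm]

section SwapMulOfSubtype

omit [Fintype α]

variable {a b : α} (N : Perm {x // x ≠ a ∧ x ≠ b})

theorem swap_mul_ofSubtype_apply_of_ne {x : α} (hx : x ≠ a ∧ x ≠ b) :
    (swap a b * Perm.ofSubtype N) x = N ⟨x, hx⟩ := by
  rw [Perm.mul_apply, Perm.ofSubtype_apply_of_mem (p := fun x => x ≠ a ∧ x ≠ b) _ hx]
  exact swap_apply_of_ne_of_ne (N ⟨x, hx⟩).2.1 (N ⟨x, hx⟩).2.2

theorem swap_mul_ofSubtype_apply_left : (swap a b * Perm.ofSubtype N) a = b := by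
  rw [Perm.mul_apply, Perm.ofSubtype_apply_of_not_mem (p := fun x => x ≠ a ∧ x ≠ b) _ (by simp),
    swap_apply_left]

theorem swap_mul_ofSubtype_apply_right : (swap a b * Perm.ofSubtype N) b = a := by
  rw [Perm.mul_apply, Perm.ofSubtype_apply_of_not_mem (p := fun x => x ≠ a ∧ x ≠ b) _ (by simp),
    swap_apply_right]

end SwapMulOfSubtype

theorem swap_mul_ofSubtype_mem_matchingsAvoiding {P : Finset α} {a b : α} (hb : b ∉ P)
    (hab : a ≠ b) {N : Perm {x // x ≠ a ∧ x ≠ b}}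
    (hN : N ∈ matchingsAvoiding (P.subtype fun x => x ≠ a ∧ x ≠ b)) :
    swap a b * Perm.ofSubtype N ∈ matchingsAvoiding P := by
  simp only [mem_matchingsAvoiding, mem_subtype, Subtype.forall] at hN ⊢
  obtain ⟨hinv, hfix, hP⟩ := hN
  refine ⟨fun x => ?_, fun x => ?_, fun x hx => ?_⟩
  · rcases eq_or_ne x a with rfl | hxa
    · rw [swap_mul_ofSubtype_apply_left, swap_mul_ofSubtype_apply_right]
    rcases eq_or_ne x b with rfl | hxb
    · rw [swap_mul_ofSubtype_apply_right, swap_mul_ofSubtype_apply_left]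
    rw [swap_mul_ofSubtype_apply_of_ne N ⟨hxa, hxb⟩,
      swap_mul_ofSubtype_apply_of_ne N (N ⟨x, hxa, hxb⟩).2]
    simpa [Subtype.ext_iff] using hinv x ⟨hxa, hxb⟩
  · rcases eq_or_ne x a with rfl | hxa
    · rw [swap_mul_ofSubtype_apply_left]; exact hab.symm
    rcases eq_or_ne x b with rfl | hxb
    · rw [swap_mul_ofSubtype_apply_right]; exact hab
    rw [swap_mul_ofSubtype_apply_of_ne N ⟨hxa, hxb⟩]
    simpa [Subtype.ext_iff] using hfix x ⟨hxa, hxb⟩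
  · rcases eq_or_ne x a with rfl | hxa
    · rwa [swap_mul_ofSubtype_apply_left]
    have hxb : x ≠ b := by rintro rfl; exact hb hx
    rw [swap_mul_ofSubtype_apply_of_ne N ⟨hxa, hxb⟩]
    exact hP x ⟨hxa, hxb⟩ hx

theorem card_filter_apply_eq_matchingsAvoiding {P : Finset α} {a b : α} (ha : a ∈ P)
    (hb : b ∉ P) :
    #{M ∈ matchingsAvoiding P | M a = b} =
      #(matchingsAvoiding (P.subtype fun x => x ≠ a ∧ x ≠ b)) := by
  have hab : a ≠ b := by rintro rfl; exact hb ha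
  refine card_bij' (fun M hM => M.subtypePerm
      (apply_ne_and_ne_iff (mem_matchingsAvoiding.1 (mem_filter.1 hM).1).1 (mem_filter.1 hM).2))
    (fun N _ => swap a b * Perm.ofSubtype N) (fun M hM => ?_)
    (fun N hN => mem_filter.2 ⟨swap_mul_ofSubtype_mem_matchingsAvoiding hb hab hN,
      swap_mul_ofSubtype_apply_left N⟩) (fun M hM => ?_)
    (fun N _ => Perm.ext fun x => Subtype.ext (swap_mul_ofSubtype_apply_of_ne N x.2))
  · obtain ⟨hinv, hfix, hP⟩ := mem_matchingsAvoiding.1 (mem_filter.1 hM).1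
    simp only [mem_matchingsAvoiding, mem_subtype, Subtype.forall, Perm.subtypePerm_apply, ne_eq,
      Subtype.ext_iff]
    exact ⟨fun x _ => hinv x, fun x _ => hfix x, fun x _ => hP x⟩
  · obtain ⟨hMP, hMa⟩ := mem_filter.1 hM
    have hinv := (mem_matchingsAvoiding.1 hMP).1
    ext x
    rcases eq_or_ne x a with rfl | hxa
    · rw [swap_mul_ofSubtype_apply_left, hMa]
    rcases eq_or_ne x b with rfl | hxb
    · rw [swap_mul_ofSubtype_apply_right, ← hMa, hinv]
    rw [swap_mul_ofSubtype_apply_of_ne _ ⟨hxa, hxb⟩, Perm.subtypePerm_apply]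

theorem card_subtype_ne_and_ne {a b : α} (hab : a ≠ b) :
    Fintype.card {x // x ≠ a ∧ x ≠ b} = Fintype.card α - 2 := by
  rw [Fintype.card_subtype]
  have : ({x | x ≠ a ∧ x ≠ b} : Finset α) = univ \ {a, b} := by ext; simp
  rw [this, card_univ_sdiff, card_pair hab]

omit [Fintype α] in
theorem card_subtype_ne_and_ne_of_mem {P : Finset α} {a b : α} (ha : a ∈ P) (hb : b ∉ P) :
    #(P.subtype fun x => x ≠ a ∧ x ≠ b) = #P - 1 := by
  rw [card_subtype, ← card_erase_of_mem ha]
  congr 1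
  ext x
  simp only [mem_filter, mem_erase]
  constructor
  · rintro ⟨hx, hxa, -⟩; exact ⟨hxa, hx⟩
  · rintro ⟨hxa, hx⟩; exact ⟨hx, hxa, by rintro rfl; exact hb hx⟩

theorem card_matchingsAvoiding_of_mem {P : Finset α} {a : α} (ha : a ∈ P) {c : ℕ}
    (hc : ∀ b ∉ P, #(matchingsAvoiding (P.subtype fun x => x ≠ a ∧ x ≠ b)) = c) :
    #(matchingsAvoiding P) = (Fintype.card α - #P) * c := by
  have hmaps : Set.MapsTo (fun M : Perm α => M a) (matchingsAvoiding P) (Pᶜ : Finset α) :=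
    fun M hM => by simpa using (mem_matchingsAvoiding.1 hM).2.2 a ha
  rw [card_eq_sum_card_fiberwise hmaps, ← card_compl, ← smul_eq_mul, ← sum_const]
  refine sum_congr rfl fun b hb => ?_
  rw [card_filter_apply_eq_matchingsAvoiding ha (mem_compl.1 hb), hc b (mem_compl.1 hb)]

theorem card_matchingsAvoiding (n : ℕ) (hα : Fintype.card α = 2 * n) (P : Finset α) :
    #(matchingsAvoiding P) = (2 * n - #P).descFactorial #P * (2 * (n - #P) - 1)‼ := by
  induction n generalizing α with
  | zero =>
    have : IsEmpty α := Fintype.card_eq_zero_iff.1 hα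
    rw [P.eq_empty_of_isEmpty]
    simp [matchingsAvoiding]
  | succ n ih =>
    have key : ∀ Q : Finset α, ∀ a ∈ Q, #(matchingsAvoiding Q) =
        (2 * (n + 1) - #Q).descFactorial #Q * (2 * (n + 1 - #Q) - 1)‼ := by
      intro Q a ha
      obtain ⟨q, hq⟩ : ∃ q, #Q = q + 1 := Nat.exists_eq_succ_of_ne_zero (card_ne_zero_of_mem ha)
      rw [card_matchingsAvoiding_of_mem ha (c := (2 * n - q).descFactorial q * (2 * (n - q) - 1)‼),
        hα, hq, ← mul_assoc, show 2 * (n + 1) - (q + 1) = 2 * n + 1 - q by omega,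
        Nat.succ_sub_mul_descFactorial_sub, Nat.add_sub_add_right]
      intro b hb
      have hab : a ≠ b := by rintro rfl; exact hb ha
      rw [ih (by rw [card_subtype_ne_and_ne hab, hα]; omega), card_subtype_ne_and_ne_of_mem ha hb,
        hq, Nat.add_sub_cancel]
    rcases P.eq_empty_or_nonempty with rfl | ⟨a, ha⟩
    · obtain ⟨a⟩ : Nonempty α := Fintype.card_pos_iff.1 (by omega)
      rw [← matchingsAvoiding_singleton a, key _ a (mem_singleton_self a), card_singleton,
        card_empty, Nat.descFactorial_one, Nat.descFactorial_zero, one_mul, Nat.add_sub_cancel,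
        Nat.sub_zero, show 2 * (n + 1) - 1 = 2 * n + 1 by omega, Nat.doubleFactorial_add_one]
    · exact key P a ha

end Matchings

section FirstBlock

variable {n : ℕ} {M : Perm (Fin (2 * n))}

theorem D_one_eq_min'_add_one (h : (rightEndpoints n M).Nonempty) :
    D n M 1 = ((rightEndpoints n M).min' h : ℕ) + 1 := by
  have hlen : 0 < ((rightEndpoints n M).sort (· ≤ ·)).length := by
    rw [length_sort]; exact h.card_pos
  have h0 : ((rightEndpoints n M).sort (· ≤ ·))[0]? = some ((rightEndpoints n M).min' h) := by
    rw [List.getElem?_eq_getElem hlen, sorted_zero_eq_min']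
  simp [D, rePos, ← List.map_eq_flatMap, h0]

theorem rightEndpoints_nonempty (hn : 1 ≤ n) (hM : M ∈ Matchings n) :
    (rightEndpoints n M).Nonempty := by
  obtain ⟨hinv, hfix⟩ := (mem_filter.1 hM).2
  let z : Fin (2 * n) := ⟨0, by omega⟩
  refine ⟨M z, mem_filter.2 ⟨mem_univ _, ?_⟩⟩
  rw [hinv, Fin.lt_def]
  exact Nat.pos_of_ne_zero fun h => hfix z (Fin.ext h)

theorem lt_D_one_iff (hn : 1 ≤ n) (hM : M ∈ Matchings n) (p : ℕ) :
    p < D n M 1 ↔ ∀ i : Fin (2 * n), (i : ℕ) < p → i < M i := by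
  have hne := rightEndpoints_nonempty hn hM
  have hmem : ∀ i, i ∈ rightEndpoints n M ↔ M i < i := by simp [rightEndpoints]
  rw [D_one_eq_min'_add_one hne, Nat.lt_succ_iff]
  constructor
  · intro hp i hi
    refine (lt_or_gt_of_ne ((mem_filter.1 hM).2.2 i)).resolve_left fun hMi => ?_
    have := min'_le _ i ((hmem i).2 hMi)
    rw [Fin.le_def] at this
    omega
  · intro h
    by_contra! hlt
    exact lt_asymm ((hmem _).1 (min'_mem _ hne)) (h _ hlt)

theorem D_one_le (hn : 1 ≤ n) (hM : M ∈ Matchings n) : D n M 1 ≤ 2 * n := by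
  rw [D_one_eq_min'_add_one (rightEndpoints_nonempty hn hM)]
  exact Fin.is_lt _

theorem filter_lt_D_one_eq_matchingsAvoiding (hn : 1 ≤ n) (p : ℕ) :
    {M ∈ Matchings n | p < D n M 1} = matchingsAvoiding {i : Fin (2 * n) | (i : ℕ) < p} := by
  ext M
  simp only [mem_filter, mem_matchingsAvoiding, mem_univ, true_and]
  constructor
  · rintro ⟨hM, hp⟩
    obtain ⟨hinv, hfix⟩ := (mem_filter.1 hM).2
    refine ⟨hinv, hfix, fun i hi hMi => ?_⟩
    have h := (lt_D_one_iff hn hM p).1 hp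
    exact lt_asymm (h i hi) (by simpa [hinv] using h (M i) hMi)
  · rintro ⟨hinv, hfix, havoid⟩
    have hM : M ∈ Matchings n := mem_filter.2 ⟨mem_univ _, hinv, hfix⟩
    refine ⟨hM, (lt_D_one_iff hn hM p).2 fun i hi => ?_⟩
    have := havoid i hi
    rw [Fin.lt_def]
    omega

theorem sum_D_one (hn : 1 ≤ n) :
    ∑ M ∈ Matchings n, D n M 1 =
      ∑ p ∈ range (2 * n), (2 * n - p).descFactorial p * (2 * (n - p) - 1)‼ := by
  calc ∑ M ∈ Matchings n, D n M 1
      = ∑ M ∈ Matchings n, #{p ∈ range (2 * n) | p < D n M 1} := by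
        refine sum_congr rfl fun M hM => ?_
        have hD := D_one_le hn hM
        rw [show {p ∈ range (2 * n) | p < D n M 1} = range (D n M 1) by
          ext p; simp only [mem_filter, mem_range]; omega, card_range]
    _ = ∑ p ∈ range (2 * n), #{M ∈ Matchings n | p < D n M 1} := by
        simp only [card_filter]; exact sum_comm
    _ = _ := by
        refine sum_congr rfl fun p hp => ?_
        rw [filter_lt_D_one_eq_matchingsAvoiding hn, card_matchingsAvoiding n (Fintype.card_fin _),
          Fin.card_filter_val_lt, min_eq_right (mem_range.1 hp).le]

theorem sum_D_one_mul_choose (hn : 1 ≤ n) :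
    (∑ M ∈ Matchings n, D n M 1) * (2 * n).choose n = (2 * n - 1)‼ * 4 ^ n := by
  have hvanish : ∀ p ∈ range (2 * n), p ∉ range (n + 1) →
      (2 * n - p).descFactorial p * (2 * (n - p) - 1)‼ * (2 * n).choose n = 0 := by
    intro p _ hp
    rw [mem_range] at hp
    rw [Nat.descFactorial_eq_zero_iff_lt.2 (by omega), zero_mul, zero_mul]
  rw [sum_D_one hn, sum_mul, ← sum_subset (range_subset_range.2 (by omega)) hvanish,
    sum_congr rfl fun p hp => Nat.descFactorial_mul_doubleFactorial_mul_choose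
      (Nat.lt_succ_iff.1 (mem_range.1 hp)), ← mul_sum, Nat.sum_range_two_pow_mul_choose]

theorem card_Matchings : #(Matchings n) = (2 * n - 1)‼ := by
  have : Matchings n = matchingsAvoiding ∅ := by ext M; simp [Matchings]
  rw [this, card_matchingsAvoiding n (Fintype.card_fin _)]
  simp

end FirstBlock

/-- **Proposition.** For every `n ≥ 1`, `E[D_{n,1}] = 2^{2n}/C(2n,n)`; equivalently,
`∑_M min{p : M(p) < p} = (2n−1)!! · 4^n / C(2n,n)`, the sum running over all
fixed-point-free involutions of `{1,…,2n}`. -/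
theorem expectation_first_block (n : ℕ) (hn : 1 ≤ n) :
    Ex n (fun M => (D n M 1 : ℝ)) = 2 ^ (2 * n) / ((2 * n).choose n : ℝ)
      ∧ (∑ M ∈ Matchings n, (D n M 1 : ℝ))
          = (Nat.doubleFactorial (2 * n - 1) : ℝ) * 4 ^ n / ((2 * n).choose n : ℝ) := by
  have hC : ((2 * n).choose n : ℝ) ≠ 0 := by exact_mod_cast (Nat.choose_pos (by omega)).ne'
  have hsum : (∑ M ∈ Matchings n, (D n M 1 : ℝ)) =
      (Nat.doubleFactorial (2 * n - 1) : ℝ) * 4 ^ n / ((2 * n).choose n : ℝ) := by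
    rw [eq_div_iff hC]
    exact_mod_cast sum_D_one_mul_choose hn
  refine ⟨?_, hsum⟩
  rw [Ex, hsum, card_Matchings, pow_mul]
  field_simp
  norm_num
end

section
/- There exists a constant C > 0 such that for every integer n ≥ 1, | Var(D_{n,1}) − (4 − π) n | ≤ C √n, where Var(D_{n,1}) = E[D_{n,1}²] − (E[D_{n,1}])² is the variance of the length of the first block. -/
open Finset MeasureTheory ProbabilityTheory Filter Real

/-!
Let `a k` be the number of matchings whose first `k` points are all left endpoints, so that
`P(D_{n,1} > k) = a k / a 0`. Conjugating by the transposition of `k` and a later point `j`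
gives the recursion `(2n - 2k) a k = (2n - k) a (k+1)`. It telescopes to
`∑ (k + 1) a k = (2n + 1) a 0`, i.e. `E[D (D + 1)] = 4n + 2`, and it solves to
`a k / a 0 = 2^k C(2n-k, n) / C(2n, n)`, so that `E[D] = 4^n / C(2n, n)` by the identity
`∑ 2^k C(2n-k, n) = 4^n`. Hence `Var D = 4n + 2 - S - S²` with `S = 4^n / C(2n, n)`, and
Wallis' product gives `π n ≤ S² ≤ π (n + 1/2)`.
-/

section Swap

variable {α : Type*} [LinearOrder α] {a j x : α}

lemma swap_apply_of_lt_of_le (hj : a ≤ j) (hx : x < a) : Equiv.swap a j x = x :=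
  Equiv.swap_apply_of_ne_of_ne hx.ne (hx.trans_le hj).ne

lemma le_swap_apply (hj : a ≤ j) (hx : a ≤ x) : a ≤ Equiv.swap a j x := by
  rw [Equiv.swap_apply_def]
  split_ifs
  exacts [hj, le_rfl, hx]

end Swap

lemma swap_conj_swap {α : Type*} [DecidableEq α] (a j : α) (M : Equiv.Perm α) :
    Equiv.swap a j * (Equiv.swap a j * M * Equiv.swap a j) * Equiv.swap a j = M := by
  simp [← mul_assoc, Equiv.swap_mul_self]

lemma Fin.card_filter_le_val {m : ℕ} (k : ℕ) : #{j : Fin m | k ≤ (j : ℕ)} = m - k := by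
  have := card_filter_add_card_filter_not (s := univ) (fun j : Fin m => (j : ℕ) < k)
  simp only [Fin.card_filter_val_lt, not_lt, card_univ, Fintype.card_fin] at this
  omega

lemma sum_range_choose_succ (N m : ℕ) :
    ∑ i ∈ range (m + 2), (N + 1).choose i
      = 2 * ∑ i ∈ range (m + 1), N.choose i + N.choose (m + 1) := by
  rw [sum_range_succ', Nat.choose_zero_right]
  simp only [Nat.choose_succ_succ', sum_add_distrib]
  have hshift := sum_range_succ' (N.choose ·) (m + 1)
  rw [sum_range_succ, Nat.choose_zero_right] at hshift
  linarith

lemma sum_choose_add_mul_two_pow (a m : ℕ) :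
    ∑ j ∈ range (m + 1), (a + j).choose j * 2 ^ (m - j)
      = ∑ i ∈ range (m + 1), (a + m + 1).choose i := by
  induction m with
  | zero => simp
  | succ m ih =>
    have hdouble : ∑ j ∈ range (m + 1), (a + j).choose j * 2 ^ (m + 1 - j)
        = 2 * ∑ j ∈ range (m + 1), (a + j).choose j * 2 ^ (m - j) := by
      rw [mul_sum]
      refine sum_congr rfl fun j hj => ?_
      rw [Nat.succ_sub (Nat.lt_succ_iff.1 (mem_range.1 hj)), pow_succ]
      ring
    rw [sum_range_succ, hdouble, ih, show a + (m + 1) + 1 = a + m + 1 + 1 by ring,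
      sum_range_choose_succ, Nat.sub_self, pow_zero, mul_one, add_assoc]

lemma sum_two_pow_mul_choose (n : ℕ) :
    ∑ k ∈ range (n + 1), 2 ^ k * (2 * n - k).choose n = 4 ^ n := by
  rw [← sum_range_reflect, ← Nat.sum_range_choose_halfway, two_mul,
    ← sum_choose_add_mul_two_pow]
  refine sum_congr rfl fun j hj => ?_
  have hj : j ≤ n := Nat.lt_succ_iff.1 (mem_range.1 hj)
  rw [show n + n - (n + 1 - 1 - j) = n + j by omega, Nat.choose_symm_add, add_tsub_cancel_right,
    mul_comm]

lemma sq_four_pow_div_centralBinom (n : ℕ) :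
    ((4 : ℝ) ^ n / n.centralBinom) ^ 2 = (2 * n + 1) * Real.Wallis.W n := by
  have hfact : (n.centralBinom : ℝ) * n.factorial * n.factorial = (2 * n).factorial := by
    have h := Nat.choose_mul_factorial_mul_factorial (show n ≤ 2 * n by omega)
    rw [show 2 * n - n = n by omega] at h
    exact_mod_cast h
  have hC : (n.centralBinom : ℝ) ≠ 0 := by exact_mod_cast n.centralBinom_ne_zero
  rw [Real.Wallis.W_eq_factorial_ratio, ← hfact]
  field_simp
  rw [show 2 ^ (4 * n) = ((2 : ℝ) ^ 2) ^ (2 * n) by rw [← pow_mul]; ring_nf]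
  ring

lemma pi_mul_le_sq_four_pow_div_centralBinom (n : ℕ) :
    π * n ≤ ((4 : ℝ) ^ n / n.centralBinom) ^ 2 := by
  rw [sq_four_pow_div_centralBinom]
  have hW := Real.Wallis.le_W n
  rw [div_mul_eq_mul_div, div_le_iff₀ (by positivity)] at hW
  nlinarith [Real.pi_pos]

lemma sq_four_pow_div_centralBinom_le (n : ℕ) :
    ((4 : ℝ) ^ n / n.centralBinom) ^ 2 ≤ π * (n + 1 / 2) := by
  rw [sq_four_pow_div_centralBinom]
  nlinarith [Real.Wallis.W_le n]

lemma sum_sum_range_eq_sum_card_smul {ι R : Type*} [AddCommMonoid R] (s : Finset ι)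
    (d : ι → ℕ) {N : ℕ} (hd : ∀ i ∈ s, d i ≤ N) (g : ℕ → R) :
    ∑ i ∈ s, ∑ k ∈ range (d i), g k = ∑ k ∈ range N, #{i ∈ s | k < d i} • g k := by
  have hext (i) (hi : i ∈ s) :
      ∑ k ∈ range (d i), g k = ∑ k ∈ range N, if k < d i then g k else 0 := by
    rw [← sum_filter]
    congr 1
    ext k
    simp only [mem_range, mem_filter]
    have := hd i hi
    omega
  rw [sum_congr rfl hext, sum_comm]
  exact sum_congr rfl fun k _ => by rw [← sum_filter, sum_const]

namespace FirstBlock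

variable {n k : ℕ} {M : Equiv.Perm (Fin (2 * n))}

lemma mem_matchings : M ∈ Matchings n ↔ (∀ p, M (M p) = p) ∧ ∀ p, M p ≠ p := by
  simp [Matchings]

lemma card_matchings_pos : 0 < #(Matchings n) := by
  refine card_pos.2 ⟨Fin.revPerm, mem_matchings.2 ⟨fun p => Fin.rev_rev p, fun p h => ?_⟩⟩
  have := congrArg Fin.val h
  simp only [Fin.revPerm_apply, Fin.val_rev] at this
  omega

lemma conj_mem_matchings (σ : Equiv.Perm (Fin (2 * n))) (hM : M ∈ Matchings n) :
    σ * M * σ⁻¹ ∈ Matchings n := by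
  obtain ⟨hinv, hfree⟩ := mem_matchings.1 hM
  refine mem_matchings.2 ⟨fun p => by simp [hinv], fun p h => hfree (σ⁻¹ p) ?_⟩
  simpa [Equiv.Perm.mul_apply, Equiv.Perm.eq_inv_iff_eq, eq_comm]
    using congrArg (σ⁻¹ : Equiv.Perm _) h

lemma mem_rightEndpoints_iff (hM : M ∈ Matchings n) (p : Fin (2 * n)) :
    p ∈ rightEndpoints n M ↔ ¬ p < M p := by
  have := (mem_matchings.1 hM).2 p
  simp only [rightEndpoints, mem_filter, mem_univ, true_and]
  omega

lemma D_one_eq_min' (h : (rightEndpoints n M).Nonempty) :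
    D n M 1 = ((rightEndpoints n M).min' h : ℕ) + 1 := by
  obtain ⟨a, t, hat⟩ := List.exists_cons_of_length_pos
    (by rw [length_sort]; exact card_pos.2 h : 0 < ((rightEndpoints n M).sort).length)
  rw [min'_eq_sorted_zero]
  simp [D, rePos, hat]

lemma lt_D_one_iff (hn : 0 < n) (hM : M ∈ Matchings n) (k : ℕ) :
    k < D n M 1 ↔ ∀ p : Fin (2 * n), (p : ℕ) < k → p < M p := by
  let last : Fin (2 * n) := ⟨2 * n - 1, by omega⟩
  have hlast : last ∈ rightEndpoints n M := by
    have hval : (last : ℕ) = 2 * n - 1 := rfl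
    have := (mem_matchings.1 hM).2 last
    rw [mem_rightEndpoints_iff hM]
    omega
  rw [D_one_eq_min' ⟨last, hlast⟩]
  constructor
  · intro hk p hp
    by_contra hnot
    have := (rightEndpoints n M).min'_le p ((mem_rightEndpoints_iff hM p).2 hnot)
    omega
  · intro h
    have := (mem_rightEndpoints_iff hM _).1 ((rightEndpoints n M).min'_mem ⟨last, hlast⟩)
    by_contra hk
    exact this (h _ (by omega))

def leftPrefix (n k : ℕ) : Finset (Equiv.Perm (Fin (2 * n))) :=
  {M ∈ Matchings n | ∀ p : Fin (2 * n), (p : ℕ) < k → p < M p}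

lemma mem_leftPrefix :
    M ∈ leftPrefix n k ↔ M ∈ Matchings n ∧ ∀ p : Fin (2 * n), (p : ℕ) < k → p < M p :=
  mem_filter

lemma leftPrefix_zero : leftPrefix n 0 = Matchings n :=
  filter_true_of_mem fun _ _ _ hp => absurd hp (Nat.not_lt_zero _)

lemma filter_lt_D_one_eq_leftPrefix (hn : 0 < n) (k : ℕ) :
    {M ∈ Matchings n | k < D n M 1} = leftPrefix n k :=
  filter_congr fun _ hM => lt_D_one_iff hn hM k

lemma le_apply_of_mem_leftPrefix (hM : M ∈ leftPrefix n k) {p : Fin (2 * n)}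
    (hp : (p : ℕ) < k) : k ≤ (M p : ℕ) := by
  obtain ⟨hMm, hopen⟩ := mem_leftPrefix.1 hM
  by_contra hlt
  have := hopen (M p) (by omega)
  rw [(mem_matchings.1 hMm).1 p] at this
  have := hopen p hp
  omega

lemma card_filter_le_val_and_le_apply (hM : M ∈ leftPrefix n k) :
    #{j : Fin (2 * n) | k ≤ (j : ℕ) ∧ k ≤ (M j : ℕ)} = 2 * n - 2 * k := by
  have hinv := (mem_matchings.1 (mem_leftPrefix.1 hM).1).1
  have hsplit := card_filter_add_card_filter_not (s := {j : Fin (2 * n) | k ≤ (j : ℕ)})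
    (fun j => k ≤ (M j : ℕ))
  have hpaired : #{j ∈ {j : Fin (2 * n) | k ≤ (j : ℕ)} | ¬ k ≤ (M j : ℕ)}
      = #{p : Fin (2 * n) | (p : ℕ) < k} := by
    refine card_nbij' M M (fun j hj => ?_) (fun p hp => ?_) (fun j _ => hinv j)
      (fun p _ => hinv p)
    · simp only [coe_filter, mem_filter, mem_univ, true_and, Set.mem_ofPred_eq] at hj ⊢
      omega
    · simp only [coe_filter, mem_filter, mem_univ, true_and, Set.mem_ofPred_eq, hinv] at hp ⊢
      exact ⟨le_apply_of_mem_leftPrefix hM hp, not_le.2 hp⟩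
  rw [filter_filter, hpaired, Fin.card_filter_le_val, Fin.card_filter_val_lt] at hsplit
  omega

lemma swap_conj_mem_leftPrefix_succ {a j : Fin (2 * n)} (ha : (a : ℕ) = k) (haj : a ≤ j)
    (hM : M ∈ leftPrefix n k) (hMj : a ≤ M j) :
    Equiv.swap a j * M * Equiv.swap a j ∈ leftPrefix n (k + 1) := by
  have hconj := conj_mem_matchings (Equiv.swap a j) (mem_leftPrefix.1 hM).1
  refine mem_leftPrefix.2 ⟨by simpa using hconj, fun p hp => ?_⟩
  rw [Equiv.Perm.mul_apply, Equiv.Perm.mul_apply]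
  obtain hpa | rfl := show p < a ∨ p = a by omega
  · rw [swap_apply_of_lt_of_le haj hpa]
    have := le_swap_apply haj (show a ≤ M p by
      have := le_apply_of_mem_leftPrefix hM (p := p) (by omega); omega)
    omega
  · have hfree := (mem_matchings.1 (mem_leftPrefix.1 hM).1).2 j
    have hne : Equiv.swap p j (M j) ≠ p := fun h => hfree (by
      rwa [Equiv.swap_apply_eq_iff, Equiv.swap_apply_left] at h)
    rw [Equiv.swap_apply_left]
    exact lt_of_le_of_ne (le_swap_apply haj hMj) hne.symm

lemma swap_conj_mem_leftPrefix {a j : Fin (2 * n)} (ha : (a : ℕ) = k) (haj : a ≤ j)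
    (hM : M ∈ leftPrefix n (k + 1)) :
    Equiv.swap a j * M * Equiv.swap a j ∈ leftPrefix n k ∧
      a ≤ (Equiv.swap a j * M * Equiv.swap a j) j := by
  have hMp {p : Fin (2 * n)} (hp : p ≤ a) : a ≤ M p := by
    have := le_apply_of_mem_leftPrefix hM (p := p) (by omega)
    omega
  have hconj := conj_mem_matchings (Equiv.swap a j) (mem_leftPrefix.1 hM).1
  refine ⟨mem_leftPrefix.2 ⟨by simpa using hconj, fun p hp => ?_⟩, ?_⟩
  · have hpa : p < a := by omega
    rw [Equiv.Perm.mul_apply, Equiv.Perm.mul_apply, swap_apply_of_lt_of_le haj hpa]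
    exact hpa.trans_le (le_swap_apply haj (hMp hpa.le))
  · rw [Equiv.Perm.mul_apply, Equiv.Perm.mul_apply, Equiv.swap_apply_right]
    exact le_swap_apply haj (hMp le_rfl)

/-- Double counting: `(M, j) ↦ ((k j) M (k j), j)` is a bijection from pairs with
`M ∈ leftPrefix n k` and `j, M j ≥ k` onto pairs with `M ∈ leftPrefix n (k + 1)`
and `j ≥ k`. -/
lemma card_leftPrefix_succ (hk : k < 2 * n) :
    (2 * n - 2 * k) * #(leftPrefix n k) = (2 * n - k) * #(leftPrefix n (k + 1)) := by
  obtain ⟨a, ha⟩ : ∃ a : Fin (2 * n), (a : ℕ) = k := ⟨⟨k, hk⟩, rfl⟩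
  let T := (leftPrefix n k).sigma fun M => {j : Fin (2 * n) | k ≤ (j : ℕ) ∧ k ≤ (M j : ℕ)}
  let U := (leftPrefix n (k + 1)).sigma fun _ => {j : Fin (2 * n) | k ≤ (j : ℕ)}
  have hT : #T = #(leftPrefix n k) * (2 * n - 2 * k) := by
    rw [card_sigma, sum_congr rfl fun M hM => card_filter_le_val_and_le_apply hM, sum_const,
      smul_eq_mul]
  have hU : #U = #(leftPrefix n (k + 1)) * (2 * n - k) := by
    rw [card_sigma, sum_const, Fin.card_filter_le_val, smul_eq_mul]
  have hTU : #T = #U := by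
    let φ (x : (_ : Equiv.Perm (Fin (2 * n))) × Fin (2 * n)) :
        (_ : Equiv.Perm (Fin (2 * n))) × Fin (2 * n) :=
      ⟨Equiv.swap a x.2 * x.1 * Equiv.swap a x.2, x.2⟩
    refine card_bij' (fun x _ => φ x) (fun x _ => φ x) ?_ ?_
      (fun x _ => by simp [φ, swap_conj_swap]) (fun x _ => by simp [φ, swap_conj_swap])
    · rintro ⟨M, j⟩ hx
      simp only [T, U, φ, mem_sigma, mem_filter, mem_univ, true_and] at hx ⊢
      obtain ⟨hM, hj, hMj⟩ := hx
      exact ⟨swap_conj_mem_leftPrefix_succ ha (by omega) hM (by omega), hj⟩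
    · rintro ⟨M, j⟩ hx
      simp only [T, U, φ, mem_sigma, mem_filter, mem_univ, true_and] at hx ⊢
      obtain ⟨hmem, hj⟩ := swap_conj_mem_leftPrefix (j := j) ha (by omega) hx.1
      exact ⟨hmem, hx.2, by omega⟩
  rw [mul_comm, ← hT, hTU, hU, mul_comm]

lemma leftPrefix_succ_eq_empty (hn : 0 < n) : leftPrefix n (n + 1) = ∅ := by
  have h := card_leftPrefix_succ (n := n) (k := n) (by omega)
  rw [show 2 * n - 2 * n = 0 by omega, show 2 * n - n = n by omega, zero_mul] at h
  exact card_eq_zero.1 ((Nat.mul_eq_zero.1 h.symm).resolve_left hn.ne')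

lemma D_one_le (hn : 0 < n) (hM : M ∈ Matchings n) : D n M 1 ≤ n + 1 := by
  by_contra h
  have : M ∈ leftPrefix n (n + 1) :=
    mem_leftPrefix.2 ⟨hM, (lt_D_one_iff hn hM _).1 (by omega)⟩
  simp [leftPrefix_succ_eq_empty hn] at this

lemma card_leftPrefix_mul_centralBinom (hk : k ≤ n) :
    #(leftPrefix n k) * n.centralBinom = #(Matchings n) * (2 ^ k * (2 * n - k).choose n) := by
  induction k with
  | zero => simp [leftPrefix_zero, Nat.centralBinom]
  | succ k ih =>
    have hrec := card_leftPrefix_succ (n := n) (k := k) (by omega)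
    have hchoose := Nat.choose_mul_succ_eq (2 * n - (k + 1)) n
    rw [show 2 * n - (k + 1) + 1 = 2 * n - k by omega] at hchoose
    rw [show 2 * n - 2 * k = 2 * (2 * n - k - n) by omega] at hrec
    refine Nat.eq_of_mul_eq_mul_left (show 0 < 2 * n - k by omega) ?_
    calc (2 * n - k) * (#(leftPrefix n (k + 1)) * n.centralBinom)
        = 2 * (2 * n - k - n) * (#(leftPrefix n k) * n.centralBinom) := by
          rw [← mul_assoc, ← hrec]; ring
      _ = 2 * #(Matchings n) * 2 ^ k * ((2 * n - k).choose n * (2 * n - k - n)) := by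
          rw [ih (by omega)]; ring
      _ = (2 * n - k) * (#(Matchings n) * (2 ^ (k + 1) * (2 * n - (k + 1)).choose n)) := by
          rw [← hchoose]; ring

lemma sum_card_leftPrefix_mul_centralBinom (n : ℕ) :
    (∑ k ∈ range (n + 1), #(leftPrefix n k)) * n.centralBinom = #(Matchings n) * 4 ^ n := by
  rw [sum_mul, sum_congr rfl fun k hk => card_leftPrefix_mul_centralBinom
    (Nat.lt_succ_iff.1 (mem_range.1 hk)), ← mul_sum, sum_two_pow_mul_choose]

lemma sum_succ_mul_card_leftPrefix (hn : 0 < n) :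
    ∑ k ∈ range (n + 1), (k + 1) * #(leftPrefix n k) = (2 * n + 1) * #(Matchings n) := by
  have telescope (m : ℕ) (hm : m ≤ n + 1) : ∑ k ∈ range m, (k + 1) * #(leftPrefix n k)
      + (2 * n + 1 - m) * #(leftPrefix n m) = (2 * n + 1) * #(Matchings n) := by
    induction m with
    | zero => simp [leftPrefix_zero]
    | succ m ih =>
      have hrec := card_leftPrefix_succ (n := n) (k := m) (by omega)
      rw [show 2 * n + 1 - (m + 1) = 2 * n - m by omega, ← hrec, sum_range_succ, add_assoc,
        ← add_mul, show m + 1 + (2 * n - 2 * m) = 2 * n + 1 - m by omega]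
      exact ih (by omega)
  simpa [leftPrefix_succ_eq_empty hn] using telescope (n + 1) le_rfl

lemma sum_D_one (hn : 0 < n) :
    ∑ M ∈ Matchings n, D n M 1 = ∑ k ∈ range (n + 1), #(leftPrefix n k) := by
  have := sum_sum_range_eq_sum_card_smul (Matchings n) (D n · 1) (fun _ => D_one_le hn)
    (fun _ => 1)
  simpa [filter_lt_D_one_eq_leftPrefix hn] using this

lemma sum_D_one_mul_succ (hn : 0 < n) :
    ∑ M ∈ Matchings n, D n M 1 * (D n M 1 + 1)
      = 2 * ∑ k ∈ range (n + 1), (k + 1) * #(leftPrefix n k) := by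
  have hgauss (d : ℕ) : ∑ k ∈ range d, 2 * (k + 1) = d * (d + 1) := by
    induction d with
    | zero => simp
    | succ d ih => rw [sum_range_succ, ih]; ring
  have := sum_sum_range_eq_sum_card_smul (Matchings n) (D n · 1) (fun _ => D_one_le hn)
    (fun k => 2 * (k + 1))
  simp only [hgauss, filter_lt_D_one_eq_leftPrefix hn, smul_eq_mul] at this
  rw [this, mul_sum]
  exact sum_congr rfl fun k _ => by ring

lemma Ex_sub (X Y : Equiv.Perm (Fin (2 * n)) → ℝ) :
    Ex n (fun M => X M - Y M) = Ex n X - Ex n Y := by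
  simp only [Ex, sum_sub_distrib, sub_div]

lemma Ex_D_one (hn : 0 < n) : Ex n (fun M => (D n M 1 : ℝ)) = 4 ^ n / n.centralBinom := by
  have hg : (#(Matchings n) : ℝ) ≠ 0 := by exact_mod_cast card_matchings_pos.ne'
  have hC : (n.centralBinom : ℝ) ≠ 0 := by exact_mod_cast n.centralBinom_ne_zero
  rw [Ex, div_eq_div_iff hg hC]
  exact_mod_cast by rw [sum_D_one hn, sum_card_leftPrefix_mul_centralBinom, mul_comm]

lemma Ex_D_one_mul_succ (hn : 0 < n) :
    Ex n (fun M => (D n M 1 : ℝ) * (D n M 1 + 1)) = 4 * n + 2 := by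
  have hg : (#(Matchings n) : ℝ) ≠ 0 := by exact_mod_cast card_matchings_pos.ne'
  rw [Ex, div_eq_iff hg]
  exact_mod_cast by rw [sum_D_one_mul_succ hn, sum_succ_mul_card_leftPrefix hn]; ring

lemma variance_D_one (hn : 0 < n) :
    Ex n (fun M => (D n M 1 : ℝ) ^ 2) - Ex n (fun M => (D n M 1 : ℝ)) ^ 2
      = 4 * n + 2 - 4 ^ n / n.centralBinom - (4 ^ n / n.centralBinom) ^ 2 := by
  have hsq : (fun M => (D n M 1 : ℝ) ^ 2)
      = fun M => (D n M 1 : ℝ) * (D n M 1 + 1) - D n M 1 := by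
    ext M; ring
  rw [hsq, Ex_sub, Ex_D_one_mul_succ hn, Ex_D_one hn]

end FirstBlock

/-- **Proposition.** There is a constant `C > 0` such that for every `n ≥ 1`,
`|Var(D_{n,1}) − (4−π)n| ≤ C√n`, where `Var(D_{n,1}) = E[D_{n,1}²] − (E[D_{n,1}])²`. -/
theorem variance_first_block :
    ∃ C : ℝ, 0 < C ∧ ∀ n : ℕ, 1 ≤ n →
      |(Ex n (fun M => ((D n M 1 : ℝ)) ^ 2) - (Ex n (fun M => (D n M 1 : ℝ))) ^ 2)
          - (4 - Real.pi) * n|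
        ≤ C * Real.sqrt n := by
  refine ⟨5, by norm_num, fun n hn => ?_⟩
  rw [FirstBlock.variance_D_one hn]
  set S : ℝ := 4 ^ n / n.centralBinom
  have hS : 0 ≤ S := by positivity
  have hlow := pi_mul_le_sq_four_pow_div_centralBinom n
  have hup := sq_four_pow_div_centralBinom_le n
  have hsqrt : 1 ≤ √(n : ℝ) := Real.one_le_sqrt.2 (by exact_mod_cast hn)
  have hsq : √(n : ℝ) ^ 2 = n := Real.sq_sqrt (by positivity)
  have hS3 : S ≤ 3 * √(n : ℝ) := by nlinarith [Real.pi_le_four]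
  rw [abs_le]
  constructor <;> nlinarith [Real.pi_le_four, Real.pi_pos]
end

section
/- There exists a constant C > 0 such that for all integers n ≥ 1 and m ≥ 1 with m³ ≤ n², one has | (n)_m − n^m · e^{−m(m−1)/(2n)} | ≤ C · (m³/n²) · n^m · e^{−m(m−1)/(2n)}; i.e., (n)_m = n^m e^{−C(m,2)/n} (1 + O(m³/n²)) uniformly for m = o(n^{2/3}). -/
/-!
Write `(n)_m = n^m ∏_{k<m} (1 - k/n)`. Since `m³ ≤ n²` forces `k/n ≤ 1/2`, each factor lies
between `exp (-x - 2x²)` and `exp (-x)` for `x = k/n`. Hence the product lies between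
`exp (-Σx) (1 - 2Σx²)` and `exp (-Σx)`, where `Σx = m(m-1)/(2n)` and `2Σx² ≤ m³/n²`; so `C = 1` works.
-/

open Finset Real

lemma exp_neg_sub_two_mul_sq_le_one_sub {x : ℝ} (hx : x ≤ 1 / 2) :
    exp (-x - 2 * x ^ 2) ≤ 1 - x := by
  have hpos : 0 < 1 - x := by linarith
  have hinv : (1 - x)⁻¹ ≤ 1 + x + 2 * x ^ 2 := by
    -- `(1 - x) (1 + x + 2x²) = 1 + x² (1 - 2x)`
    rw [inv_le_iff_one_le_mul₀' hpos]
    nlinarith [mul_nonneg (sq_nonneg x) (by linarith : 0 ≤ 1 - 2 * x)]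
  have hlog : -x - 2 * x ^ 2 ≤ log (1 - x) := by
    linarith [one_sub_inv_le_log_of_pos hpos]
  calc exp (-x - 2 * x ^ 2) ≤ exp (log (1 - x)) := exp_le_exp.mpr hlog
    _ = 1 - x := exp_log hpos

lemma prod_one_sub_le_exp_neg_sum {ι : Type*} (s : Finset ι) {x : ι → ℝ}
    (hx : ∀ i ∈ s, x i ≤ 1) : ∏ i ∈ s, (1 - x i) ≤ exp (-∑ i ∈ s, x i) := by
  rw [← sum_neg_distrib, exp_sum]
  exact prod_le_prod (fun i hi => by linarith [hx i hi]) fun i _ => one_sub_le_exp_neg (x i)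

lemma exp_neg_sum_mul_le_prod_one_sub {ι : Type*} (s : Finset ι) {x : ι → ℝ}
    (hx : ∀ i ∈ s, x i ≤ 1 / 2) :
    exp (-∑ i ∈ s, x i) * (1 - 2 * ∑ i ∈ s, x i ^ 2) ≤ ∏ i ∈ s, (1 - x i) :=
  calc exp (-∑ i ∈ s, x i) * (1 - 2 * ∑ i ∈ s, x i ^ 2)
      ≤ exp (-∑ i ∈ s, x i) * exp (-(2 * ∑ i ∈ s, x i ^ 2)) := by
        gcongr; exact one_sub_le_exp_neg _
    _ = ∏ i ∈ s, exp (-x i - 2 * x i ^ 2) := by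
        rw [← exp_add, ← exp_sum, mul_sum, ← sum_neg_distrib, ← sum_neg_distrib, ← sum_add_distrib]
        exact congrArg exp (sum_congr rfl fun i _ => by ring)
    _ ≤ ∏ i ∈ s, (1 - x i) :=
        prod_le_prod (fun i _ => (exp_pos _).le)
          fun i hi => exp_neg_sub_two_mul_sq_le_one_sub (hx i hi)

lemma abs_prod_one_sub_sub_exp_neg_sum_le {ι : Type*} (s : Finset ι) {x : ι → ℝ}
    (hx : ∀ i ∈ s, x i ≤ 1 / 2) :
    |∏ i ∈ s, (1 - x i) - exp (-∑ i ∈ s, x i)|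
      ≤ 2 * (∑ i ∈ s, x i ^ 2) * exp (-∑ i ∈ s, x i) := by
  have hupper := prod_one_sub_le_exp_neg_sum s fun i hi => by linarith [hx i hi]
  have hlower := exp_neg_sum_mul_le_prod_one_sub s hx
  rw [abs_of_nonpos (by linarith)]
  linarith

lemma cast_descFactorial_eq_pow_mul_prod_one_sub {n : ℕ} (hn : n ≠ 0) (m : ℕ) :
    (n.descFactorial m : ℝ) = (n : ℝ) ^ m * ∏ k ∈ range m, (1 - (k : ℝ) / n) := by
  rw [← descPochhammer_eval_eq_descFactorial, descPochhammer_eval_eq_prod_range,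
    ← card_range m, ← prod_const, card_range, ← prod_mul_distrib]
  refine prod_congr rfl fun k _ => ?_
  field_simp

lemma two_mul_sum_range_sq_le (m : ℕ) : 2 * ∑ k ∈ range m, k ^ 2 ≤ m ^ 3 := by
  induction m with
  | zero => simp
  | succ m ih =>
    rw [sum_range_succ, mul_add, show (m + 1) ^ 3 = m ^ 3 + 3 * m ^ 2 + 3 * m + 1 by ring]
    omega

lemma two_mul_pred_le_of_pow_three_le_sq {m n : ℕ} (h : m ^ 3 ≤ n ^ 2) : 2 * (m - 1) ≤ n := by
  by_contra! hlt
  obtain ⟨k, rfl⟩ : ∃ k, m = k + 1 := ⟨m - 1, by omega⟩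
  rw [Nat.add_sub_cancel] at hlt
  have : n ^ 2 < (k + 1) ^ 3 :=
    calc n ^ 2 < (2 * k) ^ 2 := Nat.pow_lt_pow_left hlt two_ne_zero
      _ ≤ (k + 1) ^ 3 := by nlinarith
  omega

lemma sum_range_natCast (m : ℕ) : ∑ k ∈ range m, (k : ℝ) = m * (m - 1) / 2 := by
  induction m with
  | zero => simp
  | succ m ih => rw [sum_range_succ, ih]; push_cast; ring

lemma sum_range_natCast_div (m n : ℕ) :
    ∑ k ∈ range m, (k : ℝ) / n = m * (m - 1) / (2 * n) := by
  rw [← sum_div, sum_range_natCast, div_div]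

lemma two_mul_sum_range_natCast_div_sq_le (m n : ℕ) :
    2 * ∑ k ∈ range m, ((k : ℝ) / n) ^ 2 ≤ (m : ℝ) ^ 3 / (n : ℝ) ^ 2 := by
  simp_rw [div_pow, ← sum_div, ← mul_div_assoc]
  gcongr
  exact_mod_cast two_mul_sum_range_sq_le m

/-- **Lemma.** There is a constant `C > 0` such that for all integers `n, m ≥ 1`
with `m³ ≤ n²`, the falling factorial `(n)_m` satisfies
`|(n)_m − n^m · e^{−m(m−1)/(2n)}| ≤ C · (m³/n²) · n^m · e^{−m(m−1)/(2n)}`;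
i.e. `(n)_m = n^m e^{−C(m,2)/n}(1 + O(m³/n²))` uniformly for `m = o(n^{2/3})`. -/
theorem descFactorial_asymptotic :
    ∃ C : ℝ, 0 < C ∧ ∀ n m : ℕ, 1 ≤ n → 1 ≤ m → m ^ 3 ≤ n ^ 2 →
      |((n.descFactorial m : ℝ))
          - (n : ℝ) ^ m * Real.exp (-(m * (m - 1) / (2 * n) : ℝ))|
        ≤ C * ((m : ℝ) ^ 3 / (n : ℝ) ^ 2)
          * ((n : ℝ) ^ m * Real.exp (-(m * (m - 1) / (2 * n) : ℝ))) := by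
  refine ⟨1, one_pos, fun n m hn _ hmn => ?_⟩
  have hn₀ : (0 : ℝ) < n := by exact_mod_cast hn
  have hsmall : ∀ k ∈ range m, (k : ℝ) / n ≤ 1 / 2 := fun k hk => by
    have h2k : 2 * k ≤ n := (two_mul_pred_le_of_pow_three_le_sq hmn).trans' (by grind)
    rw [div_le_iff₀ hn₀]
    have : 2 * (k : ℝ) ≤ n := by exact_mod_cast h2k
    linarith
  have hclose := abs_prod_one_sub_sub_exp_neg_sum_le (range m) hsmall
  rw [sum_range_natCast_div] at hclose
  rw [cast_descFactorial_eq_pow_mul_prod_one_sub (by omega), ← mul_sub, abs_mul,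
    abs_of_nonneg (by positivity), one_mul, mul_left_comm]
  gcongr
  exact hclose.trans (by gcongr; exact two_mul_sum_range_natCast_div_sq_le m n)
end

section
/- For all natural numbers N, i, j, l, one has ∑_{k=0}^{N} C(k, l) · C(N−k, i) · C(N−k−i, j) = C(i+j, i) · C(N+1, i+j+l+1), where C(a,b) denotes the binomial coefficient (equal to 0 when b > a, and terms with N−k−i < 0 contribute C(N−k−i,j) = 0). -/
/-!
Expanding `C(N-k, i) · C(N-k-i, j) = C(i+j, i) · C(N-k, i+j)` reduces the sum to the upper
Chu–Vandermonde identity `∑_{a+b=N} C(a,l) · C(b,m) = C(N+1, l+m+1)`, which follows by induction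
on `N` from Pascal's rule in the second factor.
-/

open Finset

theorem Nat.choose_mul_choose_sub (n i j : ℕ) :
    n.choose i * (n - i).choose j = (i + j).choose i * n.choose (i + j) := by
  have h := Nat.choose_mul (n := n) (k := i + j) (s := i) (Nat.le_add_right i j)
  rw [Nat.add_sub_cancel_left] at h
  rw [← h, Nat.choose_symm_add, mul_comm]

theorem Finset.Nat.sum_antidiagonal_choose_mul_choose (N l m : ℕ) :
    ∑ p ∈ antidiagonal N, p.1.choose l * p.2.choose m = (N + 1).choose (l + m + 1) := by
  induction N generalizing m with
  | zero => rcases l with _ | _ <;> rcases m with _ | _ <;> simp [Nat.choose_eq_zero_of_lt]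
  | succ N ih =>
    rw [Finset.Nat.sum_antidiagonal_succ']
    cases m with
    | zero =>
      have h := ih 0
      simp only [Nat.choose_zero_right, mul_one, add_zero] at h ⊢
      rw [h, ← Nat.choose_succ_succ']
    | succ m =>
      simp only [Nat.choose_succ_succ' _ m, mul_add, sum_add_distrib, ih, Nat.choose_zero_succ,
        mul_zero, zero_add]
      rw [← add_assoc l m 1, ← Nat.choose_succ_succ']

/-- **Lemma (double sum).** For all natural numbers `N`, `i`, `j`, `l`:
`∑_{k=0}^{N} C(k,l) · C(N-k,i) · C(N-k-i,j) = C(i+j,i) · C(N+1, i+j+l+1)`.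
(Here subtraction is truncated; a term in which `N-k-i` would be negative has
`C(N-k,i) = 0`, hence contributes `0`, matching the stated convention.) -/
theorem sum_choose_mul_choose_mul_choose (N i j l : ℕ) :
    ∑ k ∈ Finset.range (N + 1), k.choose l * (N - k).choose i * (N - k - i).choose j
      = (i + j).choose i * (N + 1).choose (i + j + l + 1) := by
  simp only [mul_assoc, Nat.choose_mul_choose_sub, mul_left_comm _ ((i + j).choose i), ← mul_sum]
  rw [← Finset.Nat.sum_antidiagonal_eq_sum_range_succ (fun a b ↦ a.choose l * b.choose (i + j)),
    Finset.Nat.sum_antidiagonal_choose_mul_choose, add_comm l]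
end

section
/- For every integer n ≥ 1 and every integer t with 2 ≤ t ≤ n+1, P( D_{n,1} = t ) = ( (t−1)/(2n−t+1) ) · ( 2^{t−1} (n)_{t−1} / (2n)_{t−1} ), where (x)_m = x(x−1)⋯(x−m+1) denotes the falling factorial. -/
open Finset MeasureTheory ProbabilityTheory Filter Real

open scoped Nat

/-!
`D_{n,1} = t` says that the 0-based position `a = t - 1` is the first right endpoint: `a` is
matched with some `b < a`, and every other point left of `a` is matched with a point right of
`a`. Multiplying by `swap a b` deletes the pair `{a, b}`, a bijection onto the matchings of the
remaining `2n - 2` points in which no two of the `t - 2` points of `[0, a) \ {b}` are matched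
together. Matching those constrained points one at a time shows that a set of `c` points with
`k` constrained ones has `(c - k)_k · (c - 2k - 1)‼` such matchings. Dividing by the
`(2n - 1)‼` matchings of `2n` points gives the formula.
-/

lemma Nat.factorial_two_mul_eq (m : ℕ) : (2 * m)! = 2 ^ m * m ! * (2 * m - 1)‼ := by
  rcases m with _ | p
  · rfl
  · rw [show 2 * (p + 1) = 2 * p + 1 + 1 by ring, Nat.factorial_eq_mul_doubleFactorial,
      show 2 * p + 1 + 1 = 2 * (p + 1) by ring, Nat.doubleFactorial_two_mul,
      show 2 * (p + 1) - 1 = 2 * p + 1 by omega]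

lemma Nat.sub_mul_descFactorial_mul_doubleFactorial (c j : ℕ) :
    (c - (j + 1)) * ((c - 2 - j).descFactorial j * (c - 2 - 2 * j - 1)‼) =
      (c - (j + 1)).descFactorial (j + 1) * (c - 2 * (j + 1) - 1)‼ := by
  rw [← Nat.descFactorial_mul_descFactorial (k := 1) (m := j + 1) (by omega),
    Nat.descFactorial_one, show c - 2 - j = c - (j + 1) - 1 by omega,
    show c - 2 - 2 * j - 1 = c - 2 * (j + 1) - 1 by omega, Nat.add_sub_cancel]
  ring

lemma Nat.descFactorial_mul_descFactorial_mul_doubleFactorial (m k : ℕ) :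
    (2 * m + k).descFactorial k * (2 * (m + k)).descFactorial k * (2 * m - 1)‼ =
      2 ^ k * (m + k).descFactorial k * (2 * (m + k) - 1)‼ := by
  apply Nat.eq_of_mul_eq_mul_right (by positivity : 0 < 2 ^ m * m !)
  calc (2 * m + k).descFactorial k * (2 * (m + k)).descFactorial k * (2 * m - 1)‼ * (2 ^ m * m !)
      = (2 * (m + k)).descFactorial k * ((2 * m + k - k)! * (2 * m + k).descFactorial k) := by
        rw [Nat.add_sub_cancel, Nat.factorial_two_mul_eq]; ring
    _ = (2 * (m + k))! := by
        rw [Nat.factorial_mul_descFactorial (by omega), mul_comm,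
          show 2 * m + k = 2 * (m + k) - k by omega, Nat.factorial_mul_descFactorial (by omega)]
    _ = 2 ^ k * (m + k).descFactorial k * (2 * (m + k) - 1)‼ * (2 ^ m * m !) := by
        rw [Nat.factorial_two_mul_eq,
          ← Nat.factorial_mul_descFactorial (show k ≤ m + k by omega),
          Nat.add_sub_cancel, pow_add]
        ring

namespace Equiv.Perm

variable {α : Type*} [Fintype α] [DecidableEq α]

/-- The perfect matchings of `s`, encoded as involutions of `α` whose fixed points are exactly
the points outside `s`, in which no two points of `A` are matched with each other. -/
def matchingsAvoiding (A s : Finset α) : Finset (Perm α) :=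
  {f | (∀ x, f (f x) = x) ∧ (∀ x, f x = x ↔ x ∉ s) ∧ ∀ x ∈ A, f x ∉ A}

variable {A s : Finset α} {a b : α}

lemma mem_matchingsAvoiding {f : Perm α} :
    f ∈ matchingsAvoiding A s ↔
      (∀ x, f (f x) = x) ∧ (∀ x, f x = x ↔ x ∉ s) ∧ ∀ x ∈ A, f x ∉ A := by
  simp [matchingsAvoiding]

lemma swap_mul_mem_matchingsAvoiding_erase_iff (hab : a ≠ b) (ha : a ∈ s) (hb : b ∈ s)
    (haA : a ∉ A) (hbA : b ∉ A) {f : Perm α} (hfa : f a = b) (hfb : f b = a) :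
    swap a b * f ∈ matchingsAvoiding A ((s.erase a).erase b) ↔ f ∈ matchingsAvoiding A s := by
  have hne : ∀ x, x ≠ a → x ≠ b → f x ≠ a ∧ f x ≠ b := fun x hxa hxb =>
    ⟨fun h => hxb (f.injective (h.trans hfb.symm)),
      fun h => hxa (f.injective (h.trans hfa.symm))⟩
  simp only [mem_matchingsAvoiding, mul_apply, swap_apply_def, mem_erase]
  grind

lemma card_filter_matchingsAvoiding_apply_eq (hab : a ≠ b) (ha : a ∈ s) (hb : b ∈ s)
    (haA : a ∉ A) (hbA : b ∉ A) :
    #{f ∈ matchingsAvoiding A s | f a = b} = #(matchingsAvoiding A ((s.erase a).erase b)) := by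
  refine card_nbij' (swap a b * ·) (swap a b * ·) (fun f hf => ?_) (fun g hg => ?_)
    (fun f _ => swap_mul_self_mul a b f) (fun g _ => swap_mul_self_mul a b g)
  · obtain ⟨hf, hfa⟩ := mem_filter.mp hf
    have hfb : f b = a := by rw [← hfa]; exact (mem_matchingsAvoiding.mp hf).1 a
    exact (swap_mul_mem_matchingsAvoiding_erase_iff hab ha hb haA hbA hfa hfb).mpr hf
  · have hfix := (mem_matchingsAvoiding.mp hg).2.1
    have hfa : (swap a b * g) a = b := by simp [(hfix a).mpr (by simp)]
    have hfb : (swap a b * g) b = a := by simp [(hfix b).mpr (by simp)]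
    refine mem_filter.mpr ⟨?_, hfa⟩
    rwa [← swap_mul_mem_matchingsAvoiding_erase_iff hab ha hb haA hbA hfa hfb, swap_mul_self_mul]

lemma apply_mem_sdiff_of_mem_matchingsAvoiding {f : Perm α} (hf : f ∈ matchingsAvoiding A s)
    (haA : a ∈ A) (hAs : A ⊆ s) : f a ∈ s \ A := by
  obtain ⟨hinv, hfix, hA⟩ := mem_matchingsAvoiding.mp hf
  refine mem_sdiff.mpr ⟨by_contra fun h => ?_, hA a haA⟩
  have := (hfix (f a)).mpr h
  rw [hinv] at this
  exact (hfix a).mp this.symm (hAs haA)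

lemma filter_matchingsAvoiding_apply_eq_erase (hbA : b ∉ A) :
    {f ∈ matchingsAvoiding A s | f a = b} =
      {f ∈ matchingsAvoiding (A.erase a) s | f a = b} := by
  ext f
  simp only [mem_filter, mem_matchingsAvoiding, mem_erase, and_congr_left_iff]
  refine fun hfa => and_congr_right fun hinv => and_congr_right fun _ =>
    ⟨fun hA x hx h => hA x hx.2 h.2, fun hA x hx hfx => ?_⟩
  by_cases hxa : x = a
  · rw [hxa, hfa] at hfx
    exact hbA hfx
  · have hfxa : f x = a := by_contra fun h => hA x ⟨hxa, hx⟩ ⟨h, hfx⟩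
    exact hbA (by rwa [← hfa, ← hfxa, hinv])

lemma card_matchingsAvoiding_eq_sum (haA : a ∈ A) (hAs : A ⊆ s) :
    #(matchingsAvoiding A s) =
      ∑ b ∈ s \ A, #(matchingsAvoiding (A.erase a) ((s.erase a).erase b)) := by
  rw [card_eq_sum_card_fiberwise fun f hf => apply_mem_sdiff_of_mem_matchingsAvoiding hf haA hAs]
  refine sum_congr rfl fun b hb => ?_
  obtain ⟨hbs, hbA⟩ := mem_sdiff.mp hb
  rw [filter_matchingsAvoiding_apply_eq_erase hbA,
    card_filter_matchingsAvoiding_apply_eq (ne_of_mem_of_not_mem haA hbA) (hAs haA) hbs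
      (notMem_erase a A) (fun h => hbA (mem_of_mem_erase h))]

lemma matchingsAvoiding_empty_eq_singleton (ha : a ∈ s) :
    matchingsAvoiding ∅ s = matchingsAvoiding {a} s := by
  ext f
  simp only [mem_matchingsAvoiding, mem_singleton]
  grind

lemma matchingsAvoiding_empty_empty : matchingsAvoiding (∅ : Finset α) ∅ = {1} := by
  ext f
  simp only [mem_matchingsAvoiding, notMem_empty, not_false_eq_true, iff_true, mem_singleton,
    Perm.ext_iff, one_apply]
  grind

/-- When `#s = 2 * #A`, truncated subtraction makes the last factor `0‼ = 1`, the right count. -/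
theorem card_matchingsAvoiding (hAs : A ⊆ s) (hs : Even #s) :
    #(matchingsAvoiding A s) = (#s - #A).descFactorial #A * (#s - 2 * #A - 1)‼ := by
  induction s using strongInduction generalizing A with
  | H s ih =>
  have step : ∀ A ⊆ s, ∀ a ∈ A, #(matchingsAvoiding A s) =
      (#s - #A).descFactorial #A * (#s - 2 * #A - 1)‼ := by
    intro A hAs a haA
    have term : ∀ b ∈ s \ A, #(matchingsAvoiding (A.erase a) ((s.erase a).erase b)) =
        (#s - 2 - (#A - 1)).descFactorial (#A - 1) * (#s - 2 - 2 * (#A - 1) - 1)‼ := by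
      intro b hb
      obtain ⟨hbs, hbA⟩ := mem_sdiff.mp hb
      have hb' : b ∈ s.erase a := mem_erase.mpr ⟨fun h => hbA (h ▸ haA), hbs⟩
      have hcard : #((s.erase a).erase b) = #s - 2 := by
        rw [card_erase_of_mem hb', card_erase_of_mem (hAs haA)]; omega
      have hsub : A.erase a ⊆ (s.erase a).erase b := fun x hx =>
        mem_erase.mpr ⟨fun h => hbA (h ▸ mem_of_mem_erase hx), erase_subset_erase a hAs hx⟩
      rw [ih _ ((erase_subset b _).trans_ssubset (erase_ssubset (hAs haA))) hsub
        (hcard ▸ hs.tsub even_two), hcard, card_erase_of_mem haA]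
    obtain ⟨j, hj⟩ : ∃ j, #A = j + 1 := Nat.exists_eq_add_one.mpr (card_pos.mpr ⟨a, haA⟩)
    rw [card_matchingsAvoiding_eq_sum haA hAs, sum_congr rfl term, sum_const,
      card_sdiff_of_subset hAs, smul_eq_mul, hj, Nat.add_sub_cancel]
    exact Nat.sub_mul_descFactorial_mul_doubleFactorial _ _
  rcases A.eq_empty_or_nonempty with rfl | ⟨a, haA⟩
  · rcases s.eq_empty_or_nonempty with rfl | ⟨a, ha⟩
    · simp [matchingsAvoiding_empty_empty]
    · obtain ⟨c, hc⟩ : ∃ c, #s = c + 2 := by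
        have := card_pos.mpr ⟨a, ha⟩
        obtain ⟨r, hr⟩ := hs
        exact ⟨#s - 2, by omega⟩
      rw [matchingsAvoiding_empty_eq_singleton ha, step {a} (by simpa) a (mem_singleton_self a)]
      simp only [card_singleton, card_empty, hc, Nat.descFactorial_one, Nat.descFactorial_zero]
      rw [show c + 2 - 2 * 0 - 1 = c + 1 by omega, Nat.doubleFactorial_add_one]
      simp
  · exact step A hAs a haA

omit [Fintype α] [DecidableEq α] in
lemma isLeast_setOf_apply_lt_iff [LinearOrder α] {f : Perm α} (hinv : ∀ x, f (f x) = x)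
    (hfix : ∀ x, f x ≠ x) :
    IsLeast {q | f q < q} a ↔ f a < a ∧ ∀ x < a, x ≠ f a → a < f x := by
  refine and_congr_right fun hfa => ⟨fun hle x hxa hxfa => ?_, fun h q hq => ?_⟩
  · rcases lt_trichotomy (f x) x with hlt | heq | hgt
    · exact absurd (hle hlt) (not_le.mpr hxa)
    · exact absurd heq (hfix x)
    · refine lt_of_le_of_ne (hle (show f (f x) < f x by rwa [hinv])) fun h => hxfa ?_
      rw [h, hinv]
  · by_contra! hqa
    by_cases hqfa : q = f a
    · rw [hqfa, Set.mem_ofPred_eq, hinv] at hq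
      exact absurd hq (not_lt.mpr hfa.le)
    · exact absurd ((h q hqa hqfa).trans hq) (not_lt.mpr hqa.le)

lemma card_filter_matchingsAvoiding_first_right_endpoint [LinearOrder α]
    [LocallyFiniteOrderBot α] (hα : Even (Fintype.card α)) (a : α) :
    #{f ∈ matchingsAvoiding ∅ univ | f a < a ∧ ∀ x < a, x ≠ f a → a < f x} =
      #(Iio a) * ((Fintype.card α - #(Iio a) - 1).descFactorial (#(Iio a) - 1) *
        (Fintype.card α - 2 * #(Iio a) - 1)‼) := by
  rw [card_eq_sum_card_fiberwise (f := fun f : Perm α => f a) (t := Iio a)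
    fun f hf => mem_Iio.mpr (mem_filter.mp hf).2.1, ← smul_eq_mul, ← sum_const]
  refine sum_congr rfl fun b hb => ?_
  have hba : b < a := mem_Iio.mp hb
  have hfiber : {f ∈ {f ∈ matchingsAvoiding (∅ : Finset α) univ |
      f a < a ∧ ∀ x < a, x ≠ f a → a < f x} | f a = b} =
      {f ∈ matchingsAvoiding ((Iio a).erase b) univ | f a = b} := by
    ext f
    simp only [mem_filter, mem_matchingsAvoiding, notMem_empty, mem_erase, mem_Iio]
    have hinj := f.injective
    grind
  have hcard : #((univ.erase a).erase b) = Fintype.card α - 2 := by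
    rw [card_erase_of_mem (mem_erase.mpr ⟨hba.ne, mem_univ b⟩), card_erase_of_mem (mem_univ a),
      card_univ, Nat.sub_sub]
  have hsub : (Iio a).erase b ⊆ (univ.erase a).erase b := fun x hx =>
    mem_erase.mpr ⟨(mem_erase.mp hx).1,
      mem_erase.mpr ⟨(mem_Iio.mp (mem_of_mem_erase hx)).ne, mem_univ x⟩⟩
  rw [hfiber, card_filter_matchingsAvoiding_apply_eq hba.ne' (mem_univ a) (mem_univ b) (by simp)
    (by simp), card_matchingsAvoiding hsub (hcard ▸ hα.tsub even_two), hcard,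
    card_erase_of_mem hb]
  have hk : 1 ≤ #(Iio a) := card_pos.mpr ⟨b, hb⟩
  rw [show Fintype.card α - 2 - (#(Iio a) - 1) = Fintype.card α - #(Iio a) - 1 by omega,
    show Fintype.card α - 2 - 2 * (#(Iio a) - 1) - 1 = Fintype.card α - 2 * #(Iio a) - 1 by omega]

end Equiv.Perm

lemma matchings_eq_matchingsAvoiding (n : ℕ) :
    Matchings n = Equiv.Perm.matchingsAvoiding ∅ univ := by
  ext M
  simp [Matchings, Equiv.Perm.mem_matchingsAvoiding]

lemma D_one_eq_of_nonempty {n : ℕ} {M : Equiv.Perm (Fin (2 * n))}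
    (h : (rightEndpoints n M).Nonempty) : D n M 1 = ((rightEndpoints n M).min' h : ℕ) + 1 := by
  have hlen : 0 < ((rightEndpoints n M).sort (· ≤ ·)).length := by
    rw [Finset.length_sort]; exact Finset.card_pos.2 h
  obtain ⟨p, l, hl⟩ := List.exists_cons_of_length_pos hlen
  rw [Finset.min'_eq_sorted_zero]
  simp [D, rePos, hl]

lemma D_one_eq_iff_isLeast {n t : ℕ} {M : Equiv.Perm (Fin (2 * n))} {a : Fin (2 * n)}
    (ha : (a : ℕ) + 1 = t) : D n M 1 = t ↔ IsLeast {q | M q < q} a := by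
  by_cases h : (rightEndpoints n M).Nonempty
  · rw [D_one_eq_of_nonempty h, ← ha, add_left_inj, ← Fin.ext_iff, Finset.min'_eq_iff]
    simp [rightEndpoints, IsLeast, lowerBounds]
  · have hD : D n M 1 = 0 := by simp [D, rePos, not_nonempty_iff_eq_empty.mp h]
    rw [hD, ← ha]
    exact iff_of_false (Nat.zero_ne_add_one _)
      fun hl => h ⟨a, by simpa [rightEndpoints] using hl.1⟩

lemma first_block_ratio_eq (m j : ℕ) :
    ((j + 1) * ((2 * m + j).descFactorial j * (2 * m - 1)‼) : ℝ) / (2 * (m + j + 1) - 1)‼ =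
      (j + 1) / (2 * m + j + 1) *
        (2 ^ (j + 1) * (m + j + 1).descFactorial (j + 1) /
          (2 * (m + j + 1)).descFactorial (j + 1)) := by
  have key := Nat.descFactorial_mul_descFactorial_mul_doubleFactorial m (j + 1)
  rw [show 2 * m + (j + 1) = 2 * m + j + 1 by ring, Nat.succ_descFactorial_succ,
    ← add_assoc] at key
  have hpos : (0 : ℝ) < (2 * (m + j + 1) - 1)‼ := by exact_mod_cast Nat.doubleFactorial_pos _
  have hpos' : (0 : ℝ) < (2 * (m + j + 1)).descFactorial (j + 1) := by
    exact_mod_cast Nat.descFactorial_pos.mpr (by omega)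
  have keyR := congrArg (Nat.cast : ℕ → ℝ) key
  push_cast at keyR
  generalize ((2 * (m + j + 1)).descFactorial (j + 1) : ℝ) = B at hpos' keyR ⊢
  generalize ((2 * (m + j + 1) - 1)‼ : ℝ) = C at hpos keyR ⊢
  field_simp
  linear_combination keyR

theorem prob_first_block_eq_general (n t : ℕ) (ht : 2 ≤ t) (ht' : t ≤ n + 1) :
    Pr n (fun M => D n M 1 = t)
      = (((t : ℝ) - 1) / (2 * (n : ℝ) - t + 1))
        * (2 ^ (t - 1) * (n.descFactorial (t - 1) : ℝ)
            / ((2 * n).descFactorial (t - 1) : ℝ)) := by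
  obtain ⟨j, rfl⟩ : ∃ j, t = j + 2 := ⟨t - 2, by omega⟩
  obtain ⟨m, rfl⟩ : ∃ m, n = m + j + 1 := ⟨n - j - 1, by omega⟩
  let a : Fin (2 * (m + j + 1)) := ⟨j + 1, by omega⟩
  have hevent : ∀ M ∈ Matchings (m + j + 1),
      D (m + j + 1) M 1 = j + 2 ↔ M a < a ∧ ∀ x < a, x ≠ M a → a < M x := fun M hM => by
    rw [matchings_eq_matchingsAvoiding, Equiv.Perm.mem_matchingsAvoiding] at hM
    exact (D_one_eq_iff_isLeast (a := a) rfl).trans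
      (Equiv.Perm.isLeast_setOf_apply_lt_iff hM.1 fun x => by simpa using hM.2.1 x)
  have hcount : #{M ∈ Matchings (m + j + 1) | D (m + j + 1) M 1 = j + 2} =
      (j + 1) * ((2 * m + j).descFactorial j * (2 * m - 1)‼) := by
    rw [filter_congr hevent, matchings_eq_matchingsAvoiding]
    convert Equiv.Perm.card_filter_matchingsAvoiding_first_right_endpoint (by simp) a using 2
    · congr!
    · exact (Fin.card_Iio a).symm
    rw [show #(Iio a) = j + 1 from Fin.card_Iio a, Fintype.card_fin, show 2 * (m + j + 1) - (j + 1) - 1 = 2 * m + j by omega,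
      show 2 * (m + j + 1) - 2 * (j + 1) - 1 = 2 * m - 1 by omega, Nat.add_sub_cancel]
  have htotal : #(Matchings (m + j + 1)) = (2 * (m + j + 1) - 1)‼ := by
    rw [matchings_eq_matchingsAvoiding,
      Equiv.Perm.card_matchingsAvoiding (empty_subset _) (by simp)]
    simp
  rw [Pr, filter_congr_decidable, hcount, htotal]
  push_cast
  convert first_block_ratio_eq m j using 2
  ring

/-- **Proposition.** For `n ≥ 1` and `2 ≤ t ≤ n+1`,
`P(D_{n,1} = t) = ((t−1)/(2n−t+1)) · (2^{t−1}(n)_{t−1}/(2n)_{t−1})`. -/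
theorem prob_first_block_eq (n t : ℕ) (hn : 1 ≤ n) (ht : 2 ≤ t) (ht' : t ≤ n + 1) :
    Pr n (fun M => D n M 1 = t)
      = (((t : ℝ) - 1) / (2 * (n : ℝ) - t + 1))
        * (2 ^ (t - 1) * (n.descFactorial (t - 1) : ℝ)
            / ((2 * n).descFactorial (t - 1) : ℝ)) :=
  prob_first_block_eq_general n t ht ht'
end
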